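/- Let f_n = Σ_{k=0}^{⌊n/2⌋} (−1)^k q^{k²} [n−k choose k]_q and let F(x) = Σ_{n=0}^{∞} f_n x^n be its generating function in the ring of formal power series in x over ℤ[q]. Then F(x)·(1−x) = 1 − qx²·F(qx), and consequently F(x) = Σ_{k=0}^{∞} (−1)^k q^{k²} x^{2k} · (x;q)_{k+1}^{−1}, where each (x;q)_{k+1} = (1−x)(1−qx)⋯(1−q^k x) is invertible as a formal power series. -/

import Mathlib

/-!
Comparing coefficients, `F(x)(1-x) = 1 - qx²F(qx)` says exactly that `f₀ = f₁ = 1` and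
`f_{n+2} = f_{n+1} - q^{n+1} f_n`. The recurrence follows termwise from the second q-Pascal rule
`[m+k+1 choose k+1] = q^m [m+k choose k] + [m+k choose k+1]`, and it determines the series.
So it remains to see that the sum `S` on the right satisfies the same functional equation.
Since `(x;q)_{k+2} = (1-x)(qx;q)_{k+1}`, multiplying the `(k+1)`-st summand by `1-x` gives
`-qx²` times the `k`-th summand evaluated at `qx`, while the `0`-th summand times `1-x` is `1`;
summing over `k` gives `S(x)(1-x) = 1 - qx²S(qx)`.
-/

/-- The Gaussian (q-)binomial coefficient `[n choose k]_q ∈ ℤ[q]`, defined through the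
q-Pascal recurrence `[n+1 choose k+1] = [n choose k] + q^{k+1} [n choose k+1]`. -/
noncomputable def qBinom : ℕ → ℕ → Polynomial ℤ
  | _, 0 => 1
  | 0, _ + 1 => 0
  | n + 1, k + 1 => qBinom n k + Polynomial.X ^ (k + 1) * qBinom n (k + 1)

/-- `f_n = ∑_{k=0}^{⌊n/2⌋} (-1)^k q^{k²} [n-k choose k]_q ∈ ℤ[q]`. -/
noncomputable def fPoly (n : ℕ) : Polynomial ℤ :=
  ∑ k ∈ Finset.range (n / 2 + 1),
    (-1) ^ k * Polynomial.X ^ (k ^ 2) * qBinom (n - k) k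

/-- The generating function `F(x) = ∑_{n=0}^∞ f_n x^n ∈ ℤ[q][[x]]`. -/
noncomputable def Fgen : PowerSeries (Polynomial ℤ) :=
  PowerSeries.mk fun n => fPoly n

/-- The parameter `q`, viewed as a constant of the power series ring `ℤ[q][[x]]`. -/
noncomputable def qc : PowerSeries (Polynomial ℤ) :=
  PowerSeries.C (R := Polynomial ℤ) Polynomial.X

/-- The q-Pochhammer symbol `(x;q)_{k+1} = (1-x)(1-qx)⋯(1-q^k x)` in `ℤ[q][[x]]`. -/
noncomputable def qPoch (m : ℕ) : PowerSeries (Polynomial ℤ) :=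
  ∏ i ∈ Finset.range m, (1 - qc ^ i * PowerSeries.X)

/-- The sum `∑_{k=0}^∞ f k` of a family of power series whose `k`-th member is
divisible by `x^k` (here, even by `x^{2k}`). -/
noncomputable def seriesSum (f : ℕ → PowerSeries (Polynomial ℤ)) :
    PowerSeries (Polynomial ℤ) :=
  PowerSeries.mk fun d => PowerSeries.coeff (R := Polynomial ℤ) d (∑ k ∈ Finset.range (d + 1), f k)

section QBinomial

open Polynomial

theorem qBinom_zero_right (n : ℕ) : qBinom n 0 = 1 := by cases n <;> rfl

theorem qBinom_succ_succ (n k : ℕ) :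
    qBinom (n + 1) (k + 1) = qBinom n k + X ^ (k + 1) * qBinom n (k + 1) := rfl

theorem qBinom_eq_zero_of_lt : ∀ {n k : ℕ}, n < k → qBinom n k = 0
  | _, 0, h => absurd h (Nat.not_lt_zero _)
  | 0, _ + 1, _ => rfl
  | n + 1, k + 1, h => by
    rw [qBinom_succ_succ, qBinom_eq_zero_of_lt (by omega), qBinom_eq_zero_of_lt (by omega),
      mul_zero, add_zero]

theorem qBinom_self : ∀ n : ℕ, qBinom n n = 1
  | 0 => rfl
  | n + 1 => by
    rw [qBinom_succ_succ, qBinom_self n, qBinom_eq_zero_of_lt n.lt_succ_self, mul_zero, add_zero]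

theorem qBinom_add_succ_succ (m k : ℕ) :
    qBinom (m + k + 1) (k + 1) = X ^ m * qBinom (m + k) k + qBinom (m + k) (k + 1) := by
  induction m generalizing k with
  | zero =>
    rw [zero_add, qBinom_self, qBinom_self, qBinom_eq_zero_of_lt k.lt_succ_self]; ring
  | succ m ihm =>
    induction k with
    | zero =>
      have h := ihm 0
      have hrec₁ := qBinom_succ_succ (m + 1) 0
      have hrec₀ := qBinom_succ_succ m 0
      simp only [add_zero, qBinom_zero_right] at h hrec₁ hrec₀ ⊢
      linear_combination hrec₁ + X * h - hrec₀
    | succ j ihj =>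
      rw [show m + 1 + j = m + j + 1 by omega] at ihj
      have hB := ihm (j + 1)
      rw [show m + (j + 1) = m + j + 1 by omega] at hB
      rw [show m + 1 + (j + 1) = m + j + 1 + 1 by omega, qBinom_succ_succ (m + j + 1 + 1)]
      linear_combination ihj + X ^ (j + 2) * hB - X ^ (m + 1) * qBinom_succ_succ (m + j + 1) j
        - qBinom_succ_succ (m + j + 1) (j + 1)

open Finset in
theorem fPoly_eq_sum_range {n N : ℕ} (h : n / 2 < N) :
    fPoly n = ∑ k ∈ range N, (-1) ^ k * X ^ (k ^ 2) * qBinom (n - k) k := by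
  refine sum_subset (range_subset_range.2 h) fun k hkN hk => ?_
  rw [mem_range] at hkN hk
  rw [qBinom_eq_zero_of_lt (by omega), mul_zero]

open Finset in
theorem fPoly_add_two (n : ℕ) : fPoly (n + 2) = fPoly (n + 1) - X ^ (n + 1) * fPoly n := by
  rw [fPoly_eq_sum_range (n := n + 1) (N := n / 2 + 2) (by omega), sum_range_succ',
    fPoly_eq_sum_range (N := n / 2 + 2) (by omega), sum_range_succ', fPoly, mul_sum,
    add_sub_right_comm, ← sum_sub_distrib]
  simp only [pow_zero, Nat.sub_zero, qBinom_zero_right, mul_one]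
  congr 1
  refine sum_congr rfl fun i hi => ?_
  obtain ⟨m, rfl⟩ : ∃ m, n = m + 2 * i := ⟨n - 2 * i, by rw [mem_range] at hi; omega⟩
  rw [show m + 2 * i + 2 - (i + 1) = m + i + 1 by omega,
    show m + 2 * i + 1 - (i + 1) = m + i by omega, show m + 2 * i - i = m + i by omega,
    qBinom_add_succ_succ]
  ring

end QBinomial

open PowerSeries

theorem PowerSeries.mul_one_sub_X_eq_iff {R : Type*} [CommRing R] (a : R) (F : R⟦X⟧) :
    F * (1 - X) = 1 - C a * X ^ 2 * rescale a F ↔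
      coeff 0 F = 1 ∧ coeff 1 F = 1 ∧
        ∀ n, coeff (n + 2) F = coeff (n + 1) F - a ^ (n + 1) * coeff n F := by
  have hL₀ : coeff 0 (F * (1 - X)) = coeff 0 F := by simp [mul_one_sub]
  have hL (n : ℕ) : coeff (n + 1) (F * (1 - X)) = coeff (n + 1) F - coeff n F := by
    simp [mul_one_sub]
  have hR₀ : coeff 0 (1 - C a * X ^ 2 * rescale a F) = 1 := by simp
  have hR₁ : coeff 1 (1 - C a * X ^ 2 * rescale a F) = 0 := by
    simp [mul_comm (X ^ 2 : R⟦X⟧), mul_assoc, coeff_mul_X_pow', coeff_one]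
  have hR (n : ℕ) :
      coeff (n + 2) (1 - C a * X ^ 2 * rescale a F) = -(a ^ (n + 1) * coeff n F) := by
    simp [mul_comm (X ^ 2 : R⟦X⟧), mul_assoc, coeff_rescale, coeff_one]
    ring
  rw [PowerSeries.ext_iff]
  constructor
  · intro h
    have h₀ : coeff 0 F = 1 := by rw [← hL₀, h, hR₀]
    refine ⟨h₀, ?_, fun n => ?_⟩
    · linear_combination (hL 0).symm.trans ((h 1).trans hR₁) + h₀
    · linear_combination (hL (n + 1)).symm.trans ((h (n + 2)).trans (hR n))
  · rintro ⟨h₀, h₁, h₂⟩ (_ | _ | n)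
    · rw [hL₀, hR₀, h₀]
    · rw [hL, hR₁, h₀, h₁, sub_self]
    · rw [hL, hR, h₂]
      ring

theorem PowerSeries.eq_of_mul_one_sub_X_eq {R : Type*} [CommRing R] {a : R} {F G : R⟦X⟧}
    (hF : F * (1 - X) = 1 - C a * X ^ 2 * rescale a F)
    (hG : G * (1 - X) = 1 - C a * X ^ 2 * rescale a G) : F = G := by
  obtain ⟨hF0, hF1, hF2⟩ := (mul_one_sub_X_eq_iff a F).1 hF
  obtain ⟨hG0, hG1, hG2⟩ := (mul_one_sub_X_eq_iff a G).1 hG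
  ext d : 1
  induction d using Nat.twoStepInduction with
  | zero => rw [hF0, hG0]
  | one => rw [hF1, hG1]
  | more n ih0 ih1 => rw [hF2, hG2, ih0, ih1]

theorem PowerSeries.X_pow_dvd_rescale {R : Type*} [CommRing R] {a : R} {f : R⟦X⟧} {k : ℕ}
    (h : X ^ k ∣ f) : X ^ k ∣ rescale a f := by
  obtain ⟨g, rfl⟩ := h
  exact ⟨C a ^ k * rescale a g, by rw [map_mul, map_pow, rescale_X]; ring⟩

theorem Ring.inverse_eq_of_mul_eq_one {M₀ : Type*} [CommMonoidWithZero M₀] {a b : M₀}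
    (h : a * b = 1) : Ring.inverse a = b := by
  simpa [h] using Ring.inverse_mul_cancel_left a b (IsUnit.of_mul_eq_one b h)

theorem map_ringInverse {M₀ N₀ F : Type*} [MonoidWithZero M₀] [CommMonoidWithZero N₀]
    [FunLike F M₀ N₀] [MonoidWithZeroHomClass F M₀ N₀] (f : F) {a : M₀} (ha : IsUnit a) :
    f (Ring.inverse a) = Ring.inverse (f a) :=
  (Ring.inverse_eq_of_mul_eq_one (by rw [← map_mul, Ring.mul_inverse_cancel a ha, map_one])).symm

section SeriesSum

variable {f : ℕ → PowerSeries (Polynomial ℤ)}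

theorem coeff_seriesSum_of_lt (hf : ∀ k, X ^ k ∣ f k) {d N : ℕ} (h : d < N) :
    coeff d (seriesSum f) = coeff d (∑ k ∈ Finset.range N, f k) := by
  rw [seriesSum, coeff_mk, map_sum, map_sum]
  refine Finset.sum_subset (Finset.range_subset_range.2 h) fun k _ hk => ?_
  exact X_pow_dvd_iff.1 (hf k) d (by simpa using hk)

theorem seriesSum_mul (hf : ∀ k, X ^ k ∣ f k) (g : PowerSeries (Polynomial ℤ)) :
    seriesSum f * g = seriesSum fun k => f k * g := by
  ext d : 1
  have hsum : coeff d (seriesSum fun k => f k * g) =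
      coeff d ((∑ k ∈ Finset.range (d + 1), f k) * g) := by
    rw [seriesSum, coeff_mk, Finset.sum_mul]
  rw [hsum, coeff_mul, coeff_mul]
  refine Finset.sum_congr rfl fun p hp => ?_
  have := Finset.HasAntidiagonal.mem_antidiagonal.1 hp
  rw [coeff_seriesSum_of_lt hf (N := d + 1) (by omega)]

theorem seriesSum_eq_add_seriesSum_succ (hf : ∀ k, X ^ k ∣ f k) :
    seriesSum f = f 0 + seriesSum fun k => f (k + 1) := by
  ext d : 1
  rw [map_add, seriesSum, seriesSum, coeff_mk, coeff_mk, Finset.sum_range_succ',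
    Finset.sum_range_succ, map_add, map_add, X_pow_dvd_iff.1 (hf (d + 1)) d d.lt_succ_self,
    add_zero, add_comm]

theorem rescale_seriesSum (a : Polynomial ℤ) (f : ℕ → PowerSeries (Polynomial ℤ)) :
    rescale a (seriesSum f) = seriesSum fun k => rescale a (f k) := by
  ext d : 1
  simp only [seriesSum, coeff_rescale, coeff_mk, map_sum, Finset.mul_sum]

end SeriesSum

theorem rescale_X_qc : rescale Polynomial.X qc = qc := by
  ext d : 1
  rw [coeff_rescale, qc, coeff_C]
  split_ifs with h <;> simp [h]

theorem isUnit_qPoch (m : ℕ) : IsUnit (qPoch m) := by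
  rw [isUnit_iff_constantCoeff, qPoch, map_prod]
  simp [qc]

theorem qPoch_succ (m : ℕ) : qPoch (m + 1) = (1 - X) * rescale Polynomial.X (qPoch m) := by
  rw [qPoch, qPoch, Finset.prod_range_succ', map_prod, mul_comm]
  simp only [pow_zero, one_mul, map_sub, map_one, map_mul, map_pow, rescale_X_qc, rescale_X]
  congr! 3 with i
  rw [pow_succ, mul_assoc]
  rfl

theorem Fgen_mul_one_sub_X :
    Fgen * (1 - X) = 1 - qc * X ^ 2 * rescale Polynomial.X Fgen := by
  refine (mul_one_sub_X_eq_iff _ _).2 ⟨?_, ?_, fun n => ?_⟩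
  · simp [Fgen, fPoly, qBinom_zero_right]
  · simp [Fgen, fPoly, qBinom_zero_right]
  · simpa only [Fgen, coeff_mk] using fPoly_add_two n

noncomputable def qExpansionTerm (k : ℕ) : PowerSeries (Polynomial ℤ) :=
  (-1) ^ k * qc ^ (k ^ 2) * X ^ (2 * k) * Ring.inverse (qPoch (k + 1))

theorem X_pow_dvd_qExpansionTerm (k : ℕ) : X ^ k ∣ qExpansionTerm k :=
  Dvd.dvd.mul_right (Dvd.dvd.mul_left (pow_dvd_pow _ (by omega)) _) _

theorem qExpansionTerm_zero_mul : qExpansionTerm 0 * (1 - X) = 1 := by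
  have h : qPoch 1 = 1 - X := by simp [qPoch]
  simpa [qExpansionTerm, h] using Ring.inverse_mul_cancel _ (isUnit_qPoch 1)

theorem qExpansionTerm_succ_mul (k : ℕ) :
    qExpansionTerm (k + 1) * (1 - X) =
      rescale Polynomial.X (qExpansionTerm k) * -(qc * X ^ 2) := by
  have hinv : Ring.inverse (qPoch (k + 2)) * (1 - X) =
      Ring.inverse (rescale Polynomial.X (qPoch (k + 1))) := by
    refine (Ring.inverse_eq_of_mul_eq_one ?_).symm
    calc _ = Ring.inverse (qPoch (k + 2)) * ((1 - X) * rescale Polynomial.X (qPoch (k + 1))) := by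
          ring
      _ = 1 := by rw [← qPoch_succ, Ring.inverse_mul_cancel _ (isUnit_qPoch _)]
  have hres : rescale Polynomial.X (qExpansionTerm k) =
      (-1) ^ k * qc ^ (k ^ 2) * (qc * X) ^ (2 * k)
        * Ring.inverse (rescale Polynomial.X (qPoch (k + 1))) := by
    rw [qExpansionTerm, map_mul, map_mul, map_mul, map_pow, map_pow, map_pow, rescale_X_qc,
      rescale_X, map_ringInverse _ (isUnit_qPoch _), map_neg, map_one]
    rfl
  calc qExpansionTerm (k + 1) * (1 - X)
      = (-1) ^ (k + 1) * qc ^ ((k + 1) ^ 2) * X ^ (2 * (k + 1))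
        * (Ring.inverse (qPoch (k + 2)) * (1 - X)) := by rw [qExpansionTerm]; ring
    _ = _ := by rw [hinv, hres]; ring

theorem seriesSum_qExpansionTerm_mul_one_sub_X :
    seriesSum qExpansionTerm * (1 - X)
      = 1 - qc * X ^ 2 * rescale Polynomial.X (seriesSum qExpansionTerm) := by
  have hrescale (k : ℕ) : X ^ k ∣ rescale Polynomial.X (qExpansionTerm k) :=
    X_pow_dvd_rescale (X_pow_dvd_qExpansionTerm k)
  calc seriesSum qExpansionTerm * (1 - X)
      = seriesSum fun k => qExpansionTerm k * (1 - X) := seriesSum_mul X_pow_dvd_qExpansionTerm _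
    _ = 1 + seriesSum fun k => rescale Polynomial.X (qExpansionTerm k) * -(qc * X ^ 2) := by
      rw [seriesSum_eq_add_seriesSum_succ fun k => (X_pow_dvd_qExpansionTerm k).mul_right _,
        qExpansionTerm_zero_mul]
      simp only [qExpansionTerm_succ_mul]
    _ = 1 - qc * X ^ 2 * rescale Polynomial.X (seriesSum qExpansionTerm) := by
      rw [← seriesSum_mul hrescale, ← rescale_seriesSum]
      ring

/-- `F(x)(1-x) = 1 - qx² F(qx)`, and consequently
`F(x) = ∑_{k=0}^∞ (-1)^k q^{k²} x^{2k} (x;q)_{k+1}^{-1}`, where each `(x;q)_{k+1}`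
(having constant term `1`) is invertible, its inverse being `Ring.inverse (qPoch (k+1))`. -/
theorem Fgen_functional_equation_and_expansion :
    Fgen * (1 - PowerSeries.X) = 1 - qc * PowerSeries.X ^ 2 * PowerSeries.rescale Polynomial.X Fgen
      ∧ Fgen = seriesSum (fun k =>
          (-1) ^ k * qc ^ (k ^ 2) * PowerSeries.X ^ (2 * k) * Ring.inverse (qPoch (k + 1))) :=
  ⟨Fgen_mul_one_sub_X,
    eq_of_mul_one_sub_X_eq Fgen_mul_one_sub_X seriesSum_qExpansionTerm_mul_one_sub_X⟩
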